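/- arXiv:2009.07370 — 6 statements merged into one kernel-verified Lean document; each statement's English description precedes it below -/
import Mathlib

section
/- Let θ ∈ ℝ, ξ > 0, v = ξ·(1 − cos θ, −sin θ), and R x = L_θ x + v. Then for every x ∈ ℝ² and n ∈ ℕ, −‖x‖² + 2ξ² sin²(nθ/2) ≤ ‖Rⁿ x‖² ≤ 3‖x‖² + 6ξ² sin²(nθ/2). -/
/-- The 2×2 rotation matrix by angle θ. -/
noncomputable def L (θ : ℝ) : Matrix (Fin 2) (Fin 2) ℝ :=
  !![Real.cos θ, -Real.sin θ; Real.sin θ, Real.cos θ]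

/-- View a plain vector in `Fin 2 → ℝ` as an element of the Euclidean plane. -/
def toE (x : Fin 2 → ℝ) : EuclideanSpace ℝ (Fin 2) := WithLp.toLp 2 x

/-- Matrix–vector multiplication on the Euclidean plane. -/
noncomputable def mulVecE (M : Matrix (Fin 2) (Fin 2) ℝ) (x : EuclideanSpace ℝ (Fin 2)) :
    EuclideanSpace ℝ (Fin 2) := WithLp.toLp 2 (M.mulVec x)

/-!
`R` is the rotation by `θ` about its fixed point `p = (ξ, 0)`, so `Rⁿ x = L_{nθ} x + (p - L_{nθ} p)`.
The first summand has norm `‖x‖`, the second has norm `2ξ |sin (nθ/2)|`, and both bounds follow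
from `2ab ≤ 2a² + b²/2` applied to `‖a + b‖` and `|‖b‖ - ‖a‖|`.
-/

section NormSq

variable {E : Type*} [SeminormedAddCommGroup E]

theorem norm_add_sq_le_three_mul (a b : E) :
    ‖a + b‖ ^ 2 ≤ 3 * ‖a‖ ^ 2 + 3 / 2 * ‖b‖ ^ 2 := by
  have h := norm_add_le a b
  nlinarith [norm_nonneg (a + b), sq_nonneg (2 * ‖a‖ - ‖b‖)]

theorem neg_norm_sq_add_half_le_norm_add_sq (a b : E) :
    -‖a‖ ^ 2 + ‖b‖ ^ 2 / 2 ≤ ‖a + b‖ ^ 2 := by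
  have h : |‖b‖ - ‖a‖| ≤ ‖a + b‖ := by
    simpa [add_comm] using abs_norm_sub_norm_le b (-a)
  have h' : (‖b‖ - ‖a‖) ^ 2 ≤ ‖a + b‖ ^ 2 := by
    rw [← sq_abs]; exact pow_le_pow_left₀ (abs_nonneg _) h 2
  nlinarith [sq_nonneg (2 * ‖a‖ - ‖b‖)]

end NormSq

theorem EuclideanSpace.norm_sq_fin_two (y : EuclideanSpace ℝ (Fin 2)) :
    ‖y‖ ^ 2 = y 0 ^ 2 + y 1 ^ 2 := by
  rw [EuclideanSpace.real_norm_sq_eq, Fin.sum_univ_two]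

@[simp]
theorem mulVecE_L_apply_zero (θ : ℝ) (y : EuclideanSpace ℝ (Fin 2)) :
    mulVecE (L θ) y 0 = Real.cos θ * y 0 - Real.sin θ * y 1 := by
  simp [mulVecE, L, dotProduct, Fin.sum_univ_two, sub_eq_add_neg]

@[simp]
theorem mulVecE_L_apply_one (θ : ℝ) (y : EuclideanSpace ℝ (Fin 2)) :
    mulVecE (L θ) y 1 = Real.sin θ * y 0 + Real.cos θ * y 1 := by
  simp [mulVecE, L, dotProduct, Fin.sum_univ_two]

theorem mulVecE_L_sub (θ : ℝ) (y z : EuclideanSpace ℝ (Fin 2)) :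
    mulVecE (L θ) (y - z) = mulVecE (L θ) y - mulVecE (L θ) z := by
  ext i; fin_cases i <;> simp <;> ring

theorem mulVecE_L_mulVecE_L (α β : ℝ) (y : EuclideanSpace ℝ (Fin 2)) :
    mulVecE (L α) (mulVecE (L β) y) = mulVecE (L (α + β)) y := by
  ext i; fin_cases i <;> simp [Real.cos_add, Real.sin_add] <;> ring

theorem iterate_mulVecE_L (θ : ℝ) (n : ℕ) :
    (mulVecE (L θ))^[n] = mulVecE (L (n * θ)) := by
  induction n with
  | zero => ext y i; fin_cases i <;> simp
  | succ n ih =>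
    ext y : 1
    rw [Function.iterate_succ_apply', ih, mulVecE_L_mulVecE_L]
    congr 2
    push_cast; ring

theorem norm_mulVecE_L (θ : ℝ) (y : EuclideanSpace ℝ (Fin 2)) :
    ‖mulVecE (L θ) y‖ = ‖y‖ := by
  have hsq : ‖mulVecE (L θ) y‖ ^ 2 = ‖y‖ ^ 2 := by
    simp only [EuclideanSpace.norm_sq_fin_two, mulVecE_L_apply_zero, mulVecE_L_apply_one]
    linear_combination (y 0 ^ 2 + y 1 ^ 2) * Real.sin_sq_add_cos_sq θ
  exact (pow_left_inj₀ (norm_nonneg _) (norm_nonneg _) two_ne_zero).mp hsq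

theorem norm_sub_mulVecE_L_sq (θ : ℝ) (y : EuclideanSpace ℝ (Fin 2)) :
    ‖y - mulVecE (L θ) y‖ ^ 2 = 4 * Real.sin (θ / 2) ^ 2 * ‖y‖ ^ 2 := by
  have hhalf : 4 * Real.sin (θ / 2) ^ 2 = 2 - 2 * Real.cos θ := by
    rw [Real.sin_sq_eq_half_sub, mul_div_cancel₀ θ two_ne_zero]; ring
  rw [hhalf]
  simp only [EuclideanSpace.norm_sq_fin_two, PiLp.sub_apply, mulVecE_L_apply_zero,
    mulVecE_L_apply_one]
  linear_combination (y 0 ^ 2 + y 1 ^ 2) * Real.sin_sq_add_cos_sq θ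

theorem mulVecE_L_add_eq_rotation_about (θ ξ : ℝ) (y : EuclideanSpace ℝ (Fin 2)) :
    mulVecE (L θ) y + ξ • toE ![1 - Real.cos θ, -Real.sin θ]
      = mulVecE (L θ) (y - toE ![ξ, 0]) + toE ![ξ, 0] := by
  ext i; fin_cases i <;> simp [toE] <;> ring

theorem stmt_6_general (θ ξ : ℝ) (v : EuclideanSpace ℝ (Fin 2))
    (hv : v = ξ • toE ![1 - Real.cos θ, -Real.sin θ])
    (R : EuclideanSpace ℝ (Fin 2) → EuclideanSpace ℝ (Fin 2))
    (hR : ∀ x, R x = mulVecE (L θ) x + v) :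
    ∀ (x : EuclideanSpace ℝ (Fin 2)) (n : ℕ),
      -‖x‖ ^ 2 + 2 * ξ ^ 2 * Real.sin (n * θ / 2) ^ 2 ≤ ‖R^[n] x‖ ^ 2 ∧
      ‖R^[n] x‖ ^ 2 ≤ 3 * ‖x‖ ^ 2 + 6 * ξ ^ 2 * Real.sin (n * θ / 2) ^ 2 := by
  intro x n
  set p := toE ![ξ, 0]
  have hconj : Function.Semiconj (· - p) R (mulVecE (L θ)) := fun y => by
    simp only [hR, hv, mulVecE_L_add_eq_rotation_about, p, add_sub_cancel_right]
  have hiter : R^[n] x = mulVecE (L (n * θ)) x + (p - mulVecE (L (n * θ)) p) := by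
    have h := hconj.iterate_right n x
    simp only [iterate_mulVecE_L, mulVecE_L_sub] at h
    rw [sub_eq_iff_eq_add.mp h]; abel
  have hp : ‖p‖ ^ 2 = ξ ^ 2 := by simp [EuclideanSpace.norm_sq_fin_two, p, toE]
  have hshift := norm_sub_mulVecE_L_sq (n * θ) p
  rw [hp] at hshift
  rw [hiter]
  constructor
  · have h :=
      neg_norm_sq_add_half_le_norm_add_sq (mulVecE (L (n * θ)) x) (p - mulVecE (L (n * θ)) p)
    rw [norm_mulVecE_L] at h
    linarith
  · have h := norm_add_sq_le_three_mul (mulVecE (L (n * θ)) x) (p - mulVecE (L (n * θ)) p)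
    rw [norm_mulVecE_L] at h
    linarith

theorem stmt_6 (θ ξ : ℝ) (hξ : 0 < ξ) (v : EuclideanSpace ℝ (Fin 2))
    (hv : v = ξ • toE ![1 - Real.cos θ, -Real.sin θ])
    (R : EuclideanSpace ℝ (Fin 2) → EuclideanSpace ℝ (Fin 2))
    (hR : ∀ x, R x = mulVecE (L θ) x + v) :
    ∀ (x : EuclideanSpace ℝ (Fin 2)) (n : ℕ),
      -‖x‖ ^ 2 + 2 * ξ ^ 2 * Real.sin (n * θ / 2) ^ 2 ≤ ‖R^[n] x‖ ^ 2 ∧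
      ‖R^[n] x‖ ^ 2 ≤ 3 * ‖x‖ ^ 2 + 6 * ξ ^ 2 * Real.sin (n * θ / 2) ^ 2 :=
  stmt_6_general θ ξ v hv R hR
end

section
/- For any C > 0 and any n ≥ 1, ∑_{k ≥ n+1} (n!/k!)² < 1/(n(n+2)). Consequently, if S_n := 4∑_{k ≥ 1} ξ_k² sin²(π n!/k!) with 0 < ξ_k ≤ ξ₁, then S_n ≤ 4π²ξ₁²/(n(n+2)), and S_n → 0 as n → ∞. -/
open Real Nat

/-!
Since `(n + 1 + k)! ≥ n! (n + 1)^(k + 1)`, the tail `∑_{k ≥ 0} (n!/(n + 1 + k)!)²` is dominated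
termwise by the geometric series `∑_{k ≥ 0} (n + 1)^(-2(k + 1)) = 1/(n(n + 2))`, strictly at `k = 1`.
In `S_n` the terms with `k ≤ n` vanish because `n!/k!` is an integer, and `sin² t ≤ t²` bounds the
others by `π² ξ₁²` times the terms of that tail.
-/

theorem factorial_div_factorial_add_succ_le (n k : ℕ) :
    (n ! : ℝ) / (n + 1 + k)! ≤ ((n + 1 : ℝ)⁻¹) ^ (k + 1) := by
  have h : (n ! * (n + 1) ^ (k + 1) : ℝ) ≤ (n + 1 + k)! := by
    exact_mod_cast (Nat.factorial_mul_pow_le_factorial (m := n) (n := k + 1)).trans_eq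
      (by rw [Nat.add_right_comm, Nat.add_assoc])
  rw [inv_pow, div_le_iff₀ (by positivity), ← div_eq_inv_mul, le_div_iff₀ (by positivity)]
  exact h

theorem factorial_div_factorial_add_two_lt (n : ℕ) :
    (n ! : ℝ) / (n + 1 + 1)! < ((n + 1 : ℝ)⁻¹) ^ 2 := by
  have hfac : ((n + 1 + 1)! : ℝ) = (n + 2) * (n + 1) * n ! := by
    push_cast [Nat.factorial_succ]; ring
  rw [hfac, inv_pow, ← one_div, div_lt_div_iff₀ (by positivity) (by positivity)]
  have hpos : (0 : ℝ) < n ! * (n + 1) := by positivity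
  nlinarith

theorem hasSum_inv_pow_succ_sq {x : ℝ} (hx : 1 < x) :
    HasSum (fun k : ℕ ↦ ((x⁻¹) ^ (k + 1)) ^ 2) (x ^ 2 - 1)⁻¹ := by
  have hr : (x⁻¹) ^ 2 < 1 := pow_lt_one₀ (by positivity) (inv_lt_one_of_one_lt₀ hx) two_ne_zero
  have hx2 : x ^ 2 ≠ 0 := by positivity
  have hsum : (x ^ 2 - 1)⁻¹ = x⁻¹ ^ 2 * (1 - x⁻¹ ^ 2)⁻¹ := by
    rw [inv_pow, ← mul_inv, mul_sub, mul_one, mul_inv_cancel₀ hx2]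
  have hterm : (fun k : ℕ ↦ ((x⁻¹) ^ (k + 1)) ^ 2) = fun k ↦ x⁻¹ ^ 2 * (x⁻¹ ^ 2) ^ k := by
    funext k; ring
  rw [hterm, hsum]
  exact (hasSum_geometric_of_lt_one (by positivity) hr).mul_left _

theorem summable_factorial_div_factorial_add_succ_sq (n : ℕ) (hn : 1 ≤ n) :
    Summable fun k : ℕ ↦ ((n ! : ℝ) / (n + 1 + k)!) ^ 2 :=
  (hasSum_inv_pow_succ_sq (by norm_cast; omega : (1 : ℝ) < n + 1)).summable.of_nonneg_of_le
    (fun _ ↦ by positivity)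
    (fun k ↦ pow_le_pow_left₀ (by positivity) (factorial_div_factorial_add_succ_le n k) 2)

theorem tsum_factorial_div_factorial_add_succ_sq_lt (n : ℕ) (hn : 1 ≤ n) :
    ∑' k : ℕ, ((n ! : ℝ) / (n + 1 + k)!) ^ 2 < 1 / (n * (n + 2)) := by
  have hgeom := hasSum_inv_pow_succ_sq (by norm_cast; omega : (1 : ℝ) < n + 1)
  have hle : ∀ k : ℕ, ((n ! : ℝ) / (n + 1 + k)!) ^ 2 ≤ (((n + 1 : ℝ)⁻¹) ^ (k + 1)) ^ 2 :=
    fun k ↦ pow_le_pow_left₀ (by positivity) (factorial_div_factorial_add_succ_le n k) 2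
  have hlt : ((n ! : ℝ) / (n + 1 + 1)!) ^ 2 < (((n + 1 : ℝ)⁻¹) ^ (1 + 1)) ^ 2 :=
    pow_lt_pow_left₀ (factorial_div_factorial_add_two_lt n) (by positivity) two_ne_zero
  calc ∑' k : ℕ, ((n ! : ℝ) / (n + 1 + k)!) ^ 2
      < ∑' k : ℕ, (((n + 1 : ℝ)⁻¹) ^ (k + 1)) ^ 2 :=
        (summable_factorial_div_factorial_add_succ_sq n hn).tsum_lt_tsum hle hlt hgeom.summable
    _ = 1 / (n * (n + 2)) := by rw [hgeom.tsum_eq, one_div]; ring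

theorem sin_pi_mul_factorial_div_factorial_eq_zero {m n : ℕ} (h : m ≤ n) :
    sin (π * n ! / m !) = 0 := by
  rw [mul_div_assoc, mul_comm, ← Nat.cast_div (Nat.factorial_dvd_factorial h) (by positivity)]
  exact sin_nat_mul_pi _

theorem tsum_sq_mul_sin_sq_le (ξ : ℕ → ℝ) {M : ℝ} (hξ : ∀ k, |ξ k| ≤ M) (n : ℕ) (hn : 1 ≤ n) :
    ∑' k : ℕ, ξ k ^ 2 * sin (π * n ! / (k + 1)!) ^ 2 ≤ π ^ 2 * M ^ 2 / (n * (n + 2)) := by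
  set g : ℕ → ℝ := fun k ↦ ξ k ^ 2 * sin (π * n ! / (k + 1)!) ^ 2
  have htail := summable_factorial_div_factorial_add_succ_sq n hn
  have hzero : ∀ k ∈ Finset.range n, g k = 0 := fun k hk ↦ by
    simp only [g, sin_pi_mul_factorial_div_factorial_eq_zero (Finset.mem_range.1 hk), sq,
      mul_zero]
  have hbound : ∀ k, g (k + n) ≤ (π * M) ^ 2 * ((n ! : ℝ) / (n + 1 + k)!) ^ 2 := fun k ↦ by
    have hξk : ξ (k + n) ^ 2 ≤ M ^ 2 := sq_le_sq' (abs_le.1 (hξ _)).1 (abs_le.1 (hξ _)).2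
    calc g (k + n) ≤ M ^ 2 * (π * n ! / (n + 1 + k)!) ^ 2 := by
          simp only [g, show k + n + 1 = n + 1 + k by ring]
          exact mul_le_mul hξk sin_sq_le_sq (sq_nonneg _) (sq_nonneg _)
      _ = (π * M) ^ 2 * ((n ! : ℝ) / (n + 1 + k)!) ^ 2 := by ring
  have hg : Summable fun k ↦ g (k + n) :=
    (htail.mul_left _).of_nonneg_of_le (fun _ ↦ by positivity) hbound
  calc ∑' k, g k = ∑' k, g (k + n) := by
        rw [← ((summable_nat_add_iff n).1 hg).sum_add_tsum_nat_add n, Finset.sum_eq_zero hzero,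
          zero_add]
    _ ≤ ∑' k, (π * M) ^ 2 * ((n ! : ℝ) / (n + 1 + k)!) ^ 2 :=
        hg.tsum_le_tsum hbound (htail.mul_left _)
    _ ≤ (π * M) ^ 2 * (1 / (n * (n + 2))) := by
        rw [tsum_mul_left]
        exact mul_le_mul_of_nonneg_left
          (tsum_factorial_div_factorial_add_succ_sq_lt n hn).le (sq_nonneg _)
    _ = π ^ 2 * M ^ 2 / (n * (n + 2)) := by ring

/-- `ξ k` stands for the paper's `ξ_{k+1}`. -/
theorem stmt_9 (ξ : ℕ → ℝ) (hpos : ∀ k, 0 < ξ k) (hbd : ∀ k, ξ k ≤ ξ 0)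
    (S : ℕ → ℝ)
    (hS : ∀ n, S n = 4 * ∑' k : ℕ, (ξ k) ^ 2 * sin (π * (n ! : ℝ) / (k + 1)!) ^ 2) :
    (∀ n : ℕ, 1 ≤ n →
      ∑' k : ℕ, ((n ! : ℝ) / (n + 1 + k)!) ^ 2 < 1 / (n * (n + 2))) ∧
    (∀ n : ℕ, 1 ≤ n → S n ≤ 4 * π ^ 2 * (ξ 0) ^ 2 / (n * (n + 2))) ∧
    Filter.Tendsto S Filter.atTop (nhds 0) := by
  have hξ : ∀ k, |ξ k| ≤ ξ 0 := fun k ↦ (abs_of_pos (hpos k)).trans_le (hbd k)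
  have hS_le : ∀ n : ℕ, 1 ≤ n → S n ≤ 4 * π ^ 2 * (ξ 0) ^ 2 / (n * (n + 2)) := fun n hn ↦ by
    rw [hS n, mul_assoc, mul_div_assoc]
    exact mul_le_mul_of_nonneg_left (tsum_sq_mul_sin_sq_le ξ hξ n hn) zero_le_four
  have hS_nonneg : ∀ n, 0 ≤ S n := fun n ↦ by
    rw [hS n]; exact mul_nonneg zero_le_four (tsum_nonneg fun _ ↦ by positivity)
  have hbound_tendsto : Filter.Tendsto (fun n : ℕ ↦ 4 * π ^ 2 * (ξ 0) ^ 2 / (n * (n + 2)))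
      Filter.atTop (nhds 0) :=
    tendsto_const_nhds.div_atTop <| tendsto_natCast_atTop_atTop.atTop_mul_atTop₀ <|
      Filter.tendsto_atTop_add_const_right _ 2 tendsto_natCast_atTop_atTop
  refine ⟨tsum_factorial_div_factorial_add_succ_sq_lt, hS_le, ?_⟩
  refine squeeze_zero' (.of_forall hS_nonneg) ?_ hbound_tendsto
  filter_upwards [Filter.eventually_ge_atTop 1] with n hn using hS_le n hn
end

section
/- Let (ξ_k) be a positive decreasing real sequence and define the operator 𝐑 on ℓ² (viewed as a subset of the countable product of planes ℝ²) acting coordinatewise by x_k ↦ L_{2π/k!} x_k + ξ_k(1 − cos(2π/k!), −sin(2π/k!)). Then ‖𝐑ⁿ 0‖² = 4∑_{k≥1} ξ_k² sin²(π n/k!) for every n ∈ ℕ, and ‖𝐑^{n!} 0‖ ≤ 2πξ₁/√(n(n+2)) → 0 as n → ∞. -/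
/-!
Each coordinate map is the rotation by `θ = 2π/k!` about the point `(ξ_k, 0)`, so the `n`-th
iterate of `0` has `k`-th coordinate `ξ_k (1 - cos nθ, -sin nθ)`, of squared length
`4 ξ_k² sin² (nθ/2)`. At time `n!` the coordinates `k ≤ n` vanish because `k! ∣ n!`, while for
`k = n + j + 1` one has `n!/k! ≤ (n + 1)^(-(j+1))`; with `|sin x| ≤ |x|` the remaining tail is
dominated by a geometric series of ratio `(n + 1)^(-2)`, whose sum gives `ξ₁² π² / (n (n + 2))`.
-/

open Real Nat

section L2

variable {α : Type*} {E : α → Type*} [∀ i, NormedAddCommGroup (E i)]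

theorem memℓp_two_of_summable_norm_sq {f : ∀ i, E i} (hf : Summable fun i => ‖f i‖ ^ 2) :
    Memℓp f 2 :=
  memℓp_gen (by simpa using hf)

theorem lp.norm_sq_eq_tsum (f : lp E 2) : ‖f‖ ^ 2 = ∑' i, ‖f i‖ ^ 2 := by
  simpa using lp.norm_rpow_eq_tsum (by norm_num) f

end L2

theorem iterate_apply_of_forall_apply_eq {ι : Type*} {X : ι → Type*} {F : (∀ i, X i) → ∀ i, X i}
    {g : ∀ i, X i → X i} (hF : ∀ x i, F x i = g i (x i)) (n : ℕ) (x : ∀ i, X i) (i : ι) :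
    F^[n] x i = (g i)^[n] (x i) := by
  induction n with
  | zero => rfl
  | succ n ih => rw [Function.iterate_succ_apply', hF, ih, Function.iterate_succ_apply']

theorem iterate_rotation_apply_zero (θ c : ℝ) (n : ℕ) :
    (fun x => mulVecE (L θ) x + c • toE ![1 - cos θ, -sin θ])^[n] 0
      = c • toE ![1 - cos (n * θ), -sin (n * θ)] := by
  induction n with
  | zero => ext i; fin_cases i <;> simp [toE]
  | succ n ih =>
    rw [Function.iterate_succ_apply', ih]
    ext i
    fin_cases i <;>
      simp [toE, mulVecE, L, add_mul, cos_add, sin_add] <;> ring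

theorem norm_sq_smul_one_sub_cos_sin (c a : ℝ) :
    ‖c • toE ![1 - cos (2 * a), -sin (2 * a)]‖ ^ 2 = 4 * (c ^ 2 * sin a ^ 2) := by
  rw [EuclideanSpace.norm_eq, sq_sqrt (by positivity)]
  simp only [toE, Fin.sum_univ_two, PiLp.smul_apply, Matrix.cons_val_zero, Matrix.cons_val_one,
    smul_eq_mul, norm_mul, mul_pow, Real.norm_eq_abs, sq_abs]
  rw [cos_two_mul, cos_sq', sin_two_mul]
  linear_combination (4 * c ^ 2 * sin a ^ 2) * sin_sq_add_cos_sq a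

theorem summable_sq_mul_sin_sq_div_factorial {ξ : ℕ → ℝ} {M : ℝ} (hM : ∀ k, ξ k ^ 2 ≤ M)
    (x : ℝ) : Summable fun k : ℕ => ξ k ^ 2 * sin (x / (k + 1)!) ^ 2 := by
  have hsum : Summable fun k : ℕ => M * |x| * (1 / (k + 1)! : ℝ) := by
    have := (summable_nat_add_iff 1).2 (Real.summable_pow_div_factorial 1)
    exact (this.mul_left (M * |x|)).congr fun k => by simp
  refine hsum.of_nonneg_of_le (fun k => by positivity) fun k => ?_
  have hfac : (0 : ℝ) < (k + 1)! := by positivity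
  have hsin : sin (x / (k + 1)!) ^ 2 ≤ |x| / (k + 1)! := by
    calc sin (x / (k + 1)!) ^ 2 ≤ |sin (x / (k + 1)!)| := by
          rw [← sq_abs]; exact pow_le_of_le_one (abs_nonneg _) (abs_sin_le_one _) two_ne_zero
      _ ≤ |x / (k + 1)!| := abs_sin_le_abs
      _ = |x| / (k + 1)! := by rw [abs_div, abs_of_pos hfac]
  calc ξ k ^ 2 * sin (x / (k + 1)!) ^ 2 ≤ M * (|x| / (k + 1)!) :=
        mul_le_mul (hM k) hsin (sq_nonneg _) ((sq_nonneg _).trans (hM k))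
    _ = M * |x| * (1 / (k + 1)!) := by ring

theorem sin_pi_mul_factorial_div_factorial {k n : ℕ} (h : k ≤ n) :
    sin (π * n ! / k !) = 0 := by
  have hk : (k ! : ℝ) ≠ 0 := by positivity
  rw [mul_div_assoc, ← Nat.cast_div (Nat.factorial_dvd_factorial h) hk, mul_comm,
    sin_nat_mul_pi]

theorem factorial_div_factorial_add_le (n j : ℕ) :
    (n ! : ℝ) / (n + j)! ≤ (1 / (n + 1)) ^ j := by
  rw [div_pow, one_pow, div_le_div_iff₀ (by positivity) (by positivity), one_mul]
  exact_mod_cast Nat.factorial_mul_pow_le_factorial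

theorem tsum_le_of_eq_zero_of_le_geometric {f : ℕ → ℝ} (hf : Summable f) {n : ℕ}
    (hzero : ∀ k < n, f k = 0) {C r : ℝ} (hr₀ : 0 ≤ r) (hr₁ : r < 1)
    (hle : ∀ j, f (n + j) ≤ C * r ^ (j + 1)) : ∑' k, f k ≤ C * r / (1 - r) := by
  have hgeom : HasSum (fun j : ℕ => C * r * r ^ j) (C * r * (1 - r)⁻¹) :=
    (hasSum_geometric_of_lt_one hr₀ hr₁).mul_left (C * r)
  rw [← hf.sum_add_tsum_nat_add n, Finset.sum_eq_zero fun k hk => hzero k (Finset.mem_range.1 hk),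
    zero_add, div_eq_mul_inv]
  refine hasSum_le (fun j => ?_) ((summable_nat_add_iff n).2 hf).hasSum hgeom
  rw [add_comm]
  exact (hle j).trans_eq (by ring)

theorem tsum_sq_mul_sin_sq_factorial_le {ξ : ℕ → ℝ} {M : ℝ} (hM : ∀ k, ξ k ^ 2 ≤ M) {n : ℕ}
    (hn : 1 ≤ n) :
    ∑' k : ℕ, ξ k ^ 2 * sin (π * (n ! : ℝ) / (k + 1)!) ^ 2 ≤ M * π ^ 2 / (n * (n + 2)) := by
  have hM₀ : 0 ≤ M := (sq_nonneg _).trans (hM 0)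
  have hn' : (1 : ℝ) ≤ n := by exact_mod_cast hn
  set r : ℝ := (1 / (n + 1)) ^ 2 with hr
  have hr₁ : r < 1 := by
    rw [hr, div_pow, one_pow, div_lt_one (by positivity)]
    nlinarith
  have hsum : M * π ^ 2 * r / (1 - r) = M * π ^ 2 / (n * (n + 2)) := by
    have hn₀ : (n : ℝ) ≠ 0 := by positivity
    rw [hr]
    field_simp
    rw [show ((n : ℝ) + 1) ^ 2 - 1 = n * (n + 2) by ring]
    field_simp
  rw [← hsum]
  refine tsum_le_of_eq_zero_of_le_geometric (summable_sq_mul_sin_sq_div_factorial hM _)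
    (fun k hk => by rw [sin_pi_mul_factorial_div_factorial hk]; ring) (by positivity) hr₁
    fun j => ?_
  have hratio : (n ! : ℝ) / (n + j + 1)! ≤ (1 / (n + 1)) ^ (j + 1) := by
    exact_mod_cast factorial_div_factorial_add_le n (j + 1)
  calc ξ (n + j) ^ 2 * sin (π * n ! / (n + j + 1)!) ^ 2
      ≤ M * (π * (n ! / (n + j + 1)!)) ^ 2 := by
        rw [← mul_div_assoc]
        exact mul_le_mul (hM _) sin_sq_le_sq (sq_nonneg _) hM₀
    _ ≤ M * (π * (1 / (n + 1)) ^ (j + 1)) ^ 2 := by gcongr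
    _ = M * π ^ 2 * r ^ (j + 1) := by ring

theorem norm_sq_iterate_zero_apply (ξ : ℕ → ℝ)
    {F : (ℕ → EuclideanSpace ℝ (Fin 2)) → ℕ → EuclideanSpace ℝ (Fin 2)}
    (hF : ∀ x k, F x k = mulVecE (L (2 * π / (k + 1)!)) (x k)
        + ξ k • toE ![1 - Real.cos (2 * π / (k + 1)!), -Real.sin (2 * π / (k + 1)!)])
    (n k : ℕ) : ‖F^[n] 0 k‖ ^ 2 = 4 * (ξ k ^ 2 * sin (π * n / (k + 1)!) ^ 2) := by
  rw [iterate_apply_of_forall_apply_eq (g := fun k y => mulVecE (L (2 * π / (k + 1)!)) y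
      + ξ k • toE ![1 - cos (2 * π / (k + 1)!), -sin (2 * π / (k + 1)!)]) hF,
    Pi.zero_apply, iterate_rotation_apply_zero,
    show (n : ℝ) * (2 * π / (k + 1)!) = 2 * (π * n / (k + 1)!) by ring,
    norm_sq_smul_one_sub_cos_sin]

theorem tendsto_div_natCast_mul_add_two (C : ℝ) :
    Filter.Tendsto (fun n : ℕ => C / (n * (n + 2))) Filter.atTop (nhds 0) :=
  tendsto_const_nhds.div_atTop <| tendsto_natCast_atTop_atTop.atTop_mul_atTop₀
    (Filter.tendsto_atTop_add_const_right _ 2 tendsto_natCast_atTop_atTop)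

/-- `ξ k` is the paper's `ξ_{k+1}`; `F` is the coordinatewise action of 𝐑. -/
theorem stmt_10 (ξ : ℕ → ℝ) (hpos : ∀ k, 0 < ξ k) (hdec : ∀ k, ξ (k + 1) ≤ ξ k)
    (F : (ℕ → EuclideanSpace ℝ (Fin 2)) → ℕ → EuclideanSpace ℝ (Fin 2))
    (hF : ∀ x k, F x k = mulVecE (L (2 * π / (k + 1)!)) (x k)
        + ξ k • toE ![1 - Real.cos (2 * π / (k + 1)!), -Real.sin (2 * π / (k + 1)!)]) :
    (∀ n : ℕ, Memℓp (F^[n] 0) 2) ∧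
    (∀ (n : ℕ) (h : Memℓp (F^[n] 0) 2),
      ‖(⟨F^[n] 0, h⟩ : lp (fun _ : ℕ => EuclideanSpace ℝ (Fin 2)) 2)‖ ^ 2
        = 4 * ∑' k : ℕ, (ξ k) ^ 2 * Real.sin (π * n / (k + 1)!) ^ 2) ∧
    (∀ n : ℕ, 1 ≤ n → ∀ h : Memℓp (F^[n !] 0) 2,
      ‖(⟨F^[n !] 0, h⟩ : lp (fun _ : ℕ => EuclideanSpace ℝ (Fin 2)) 2)‖
        ≤ 2 * π * ξ 0 / Real.sqrt (n * (n + 2))) ∧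
    Filter.Tendsto
      (fun n : ℕ => 4 * ∑' k : ℕ, (ξ k) ^ 2 * Real.sin (π * (n ! : ℝ) / (k + 1)!) ^ 2)
      Filter.atTop (nhds 0) := by
  have hM : ∀ k, ξ k ^ 2 ≤ ξ 0 ^ 2 := fun k =>
    pow_le_pow_left₀ (hpos k).le (antitone_nat_of_succ_le hdec k.zero_le) 2
  have hnorm := norm_sq_iterate_zero_apply ξ hF
  have hnorm_sq_eq (n : ℕ) (h : Memℓp (F^[n] 0) 2) :
      ‖(⟨F^[n] 0, h⟩ : lp (fun _ : ℕ => EuclideanSpace ℝ (Fin 2)) 2)‖ ^ 2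
        = 4 * ∑' k : ℕ, (ξ k) ^ 2 * Real.sin (π * n / (k + 1)!) ^ 2 := by
    rw [lp.norm_sq_eq_tsum, ← tsum_mul_left]
    exact tsum_congr (hnorm n)
  refine ⟨fun n => memℓp_two_of_summable_norm_sq ?_, hnorm_sq_eq, fun n hn h => ?_, ?_⟩
  · simpa only [hnorm] using (summable_sq_mul_sin_sq_div_factorial hM (π * n)).mul_left 4
  · have hbound : 0 ≤ 2 * π * ξ 0 / √(n * (n + 2)) := by
      have := (hpos 0).le
      positivity
    rw [← pow_le_pow_iff_left₀ (norm_nonneg _) hbound two_ne_zero, hnorm_sq_eq, div_pow,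
      sq_sqrt (by positivity)]
    calc 4 * ∑' k : ℕ, ξ k ^ 2 * sin (π * (n ! : ℝ) / (k + 1)!) ^ 2
        ≤ 4 * (ξ 0 ^ 2 * π ^ 2 / (n * (n + 2))) := by
          gcongr; exact tsum_sq_mul_sin_sq_factorial_le hM hn
      _ = (2 * π * ξ 0) ^ 2 / (n * (n + 2)) := by ring
  · refine squeeze_zero' (.of_forall fun n => by positivity)
      ((Filter.eventually_ge_atTop 1).mono fun n hn => ?_)
      (by simpa only [mul_zero] using
        (tendsto_div_natCast_mul_add_two (ξ 0 ^ 2 * π ^ 2)).const_mul (4 : ℝ))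
    gcongr
    exact tsum_sq_mul_sin_sq_factorial_le hM hn
end

section
/- Define s_n := 1 + ∑_{m=1}^{n−1} ⌈m/2⌉·(m+2)! for n ≥ 1. Then for all integers k with 4 ≤ k ≤ n + 2, the fractional part of s_n/k! is at least 1/2 − 3/(2k). -/
open Real Nat

/-- s_n = 1 + ∑_{m=1}^{n-1} ⌈m/2⌉·(m+2)! . -/
noncomputable def s (n : ℕ) : ℤ :=
  1 + ∑ m ∈ Finset.Icc 1 (n - 1), ⌈(m : ℚ) / 2⌉ * ((m + 2)! : ℤ)

/-!
Every term of `s n` with index `m ≥ k - 2` is divisible by `k!`, so `s n ≡ s (k - 2) [ZMOD k!]`.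
The partial sum `s (k - 2)` is a positive integer below `k!`, hence equals the residue of `s n`,
and its last term `⌈(k-3)/2⌉ (k-1)! ≥ (k-3)(k-1)!/2` already gives
`s (k - 2) / k! ≥ (k - 3) / (2k) = 1/2 - 3/(2k)`.
-/

lemma ceil_half_le_self (m : ℕ) : ⌈(m : ℚ) / 2⌉ ≤ (m : ℤ) := by
  rw [Int.ceil_le]
  push_cast
  linarith [(Nat.cast_nonneg m : (0 : ℚ) ≤ m)]

lemma le_two_mul_ceil_half (m : ℕ) : (m : ℤ) ≤ 2 * ⌈(m : ℚ) / 2⌉ := by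
  have h : (m : ℚ) / 2 ≤ ⌈(m : ℚ) / 2⌉ := Int.le_ceil _
  exact_mod_cast (by push_cast; linarith : ((m : ℤ) : ℚ) ≤ ((2 * ⌈(m : ℚ) / 2⌉ : ℤ) : ℚ))

lemma s_succ (n : ℕ) : s (n + 1) = s n + ⌈(n : ℚ) / 2⌉ * ((n + 2)! : ℤ) := by
  cases n with
  | zero => simp [s]
  | succ n =>
    simp only [s, Nat.add_sub_cancel, Finset.sum_Icc_succ_top (Nat.le_add_left 1 n)]
    push_cast
    ring

lemma one_le_s (n : ℕ) : 1 ≤ s n :=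
  le_add_of_nonneg_right <| Finset.sum_nonneg fun m _ => by positivity

lemma s_lt_factorial (n : ℕ) : s n < ((n + 2)! : ℤ) := by
  induction n with
  | zero => decide
  | succ n ih =>
    have hfac : (((n + 3)! : ℕ) : ℤ) = (n + 3) * ((n + 2)! : ℤ) := by
      push_cast [Nat.factorial_succ (n + 2)]; ring
    rw [s_succ, hfac]
    nlinarith [ceil_half_le_self n, Nat.factorial_pos (n + 2)]

lemma mul_factorial_le_two_mul_s_succ (n : ℕ) :
    (n : ℤ) * ((n + 2)! : ℤ) ≤ 2 * s (n + 1) := by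
  rw [s_succ]
  nlinarith [le_two_mul_ceil_half n, one_le_s n, Nat.factorial_pos (n + 2)]

lemma s_modEq_of_le {j n : ℕ} (h : j ≤ n) : s n ≡ s j [ZMOD ((j + 2)! : ℤ)] := by
  induction n, h using Nat.le_induction with
  | base => rfl
  | succ n hjn ih =>
    have hdvd : ((j + 2)! : ℤ) ∣ ⌈(n : ℚ) / 2⌉ * ((n + 2)! : ℤ) :=
      Dvd.dvd.mul_left (Int.natCast_dvd_natCast.mpr (Nat.factorial_dvd_factorial (by omega))) _
    rw [s_succ]
    simpa using ih.add (Int.modEq_zero_iff_dvd.mpr hdvd)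

lemma fract_s_div_factorial {j n : ℕ} (h : j ≤ n) :
    Int.fract ((s n : ℝ) / ((j + 2)! : ℝ)) = (s j : ℝ) / ((j + 2)! : ℝ) := by
  rw [Int.fract_div_intCast_eq_div_intCast_mod, s_modEq_of_le h,
    Int.emod_eq_of_lt (by linarith [one_le_s j]) (s_lt_factorial j)]

lemma half_sub_le_s_div_factorial (m : ℕ) :
    1 / 2 - 3 / (2 * ((m + 3 : ℕ) : ℝ)) ≤ (s (m + 1) : ℝ) / ((m + 3)! : ℝ) := by
  have hfac : ((m + 3)! : ℝ) = (m + 3) * ((m + 2)! : ℝ) := by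
    push_cast [Nat.factorial_succ (m + 2)]; ring
  have hlow : (m : ℝ) * ((m + 2)! : ℝ) ≤ 2 * (s (m + 1) : ℝ) := by
    exact_mod_cast mul_factorial_le_two_mul_s_succ m
  have hpos : (0 : ℝ) < ((m + 2)! : ℝ) := by positivity
  rw [hfac, le_div_iff₀ (by positivity)]
  calc (1 / 2 - 3 / (2 * ((m + 3 : ℕ) : ℝ))) * ((m + 3) * ((m + 2)! : ℝ))
      = m * ((m + 2)! : ℝ) / 2 := by push_cast; field_simp; ring
    _ ≤ s (m + 1) := by linarith

theorem stmt_12_general (n : ℕ) :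
    ∀ k : ℕ, 4 ≤ k → k ≤ n + 2 →
      1 / 2 - 3 / (2 * (k : ℝ)) ≤ Int.fract ((s n : ℝ) / (k ! : ℝ)) := by
  intro k hk hkn
  obtain ⟨m, rfl⟩ : ∃ m, k = m + 3 := ⟨k - 3, by omega⟩
  rw [fract_s_div_factorial (by omega : m + 1 ≤ n)]
  exact half_sub_le_s_div_factorial m

theorem stmt_12 (n : ℕ) (hn : 1 ≤ n) :
    ∀ k : ℕ, 4 ≤ k → k ≤ n + 2 →
      1 / 2 - 3 / (2 * (k : ℝ)) ≤ Int.fract ((s n : ℝ) / (k ! : ℝ)) :=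
  stmt_12_general n
end

section
/- Define s_n := 1 + ∑_{m=1}^{n−1} ⌈m/2⌉·(m+2)! for n ≥ 1. Then for all integers k with 5 ≤ k ≤ n + 2, the fractional part of s_n/k! is at most 1/2 + 13/(24k). -/
/-
For `m ≥ k - 2` the summand `⌈m/2⌉ (m+2)!` is divisible by `k!`, so `s n ≡ s (k-2) (mod k!)`.
Since `2⌈m/2⌉ ≤ m + 1`, induction gives `0 < 2 s j ≤ (j+2)!`; hence `s (k-2)` is already the
least residue of `s n` modulo `k!`, and the fractional part of `s n / k!` is `s (k-2) / k! ≤ 1/2`.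
-/

open Real Nat

lemma s_zero : s 0 = 1 := by
  simp [s]

lemma two_mul_ceil_half_le (n : ℕ) : 2 * ⌈(n : ℚ) / 2⌉ ≤ n + 1 := by
  have h : (2 * ⌈(n : ℚ) / 2⌉ : ℚ) < n + 2 := by
    linarith [Int.ceil_lt_add_one ((n : ℚ) / 2)]
  have h' : 2 * ⌈(n : ℚ) / 2⌉ < n + 2 := by exact_mod_cast h
  omega

lemma s_pos (n : ℕ) : 0 < s n := by
  induction n with
  | zero => simp [s_zero]
  | succ n ih =>
    rw [s_succ]
    have : 0 ≤ ⌈(n : ℚ) / 2⌉ := Int.ceil_nonneg (by positivity)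
    positivity

lemma two_mul_s_le_factorial (n : ℕ) : 2 * s n ≤ ((n + 2)! : ℤ) := by
  induction n with
  | zero => simp [s_zero]
  | succ n ih =>
    have hceil := two_mul_ceil_half_le n
    calc 2 * s (n + 1) = 2 * s n + 2 * ⌈(n : ℚ) / 2⌉ * ((n + 2)! : ℤ) := by rw [s_succ]; ring
      _ ≤ ((n + 2)! : ℤ) + (n + 1) * ((n + 2)! : ℤ) := by gcongr
      _ ≤ (n + 3) * ((n + 2)! : ℤ) := by linarith
      _ = ((n + 1 + 2)! : ℤ) := by
        rw [Nat.factorial_succ (n + 2)]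
        push_cast
        ring

lemma factorial_dvd_s_sub {j n : ℕ} (hjn : j ≤ n) : ((j + 2)! : ℤ) ∣ s n - s j := by
  induction n, hjn using Nat.le_induction with
  | base => simp
  | succ n hjn ih =>
    rw [s_succ, add_sub_right_comm]
    refine dvd_add ih (Dvd.dvd.mul_left ?_ _)
    exact_mod_cast Nat.factorial_dvd_factorial (by omega)

lemma s_emod_factorial {j n : ℕ} (hjn : j ≤ n) : s n % ((j + 2)! : ℤ) = s j := by
  have hmod : s j ≡ s n [ZMOD ((j + 2)! : ℤ)] := Int.modEq_iff_dvd.mpr (factorial_dvd_s_sub hjn)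
  rw [← hmod.eq, Int.emod_eq_of_lt (s_pos j).le]
  linarith [two_mul_s_le_factorial j, s_pos j]

theorem stmt_13_general (n : ℕ) :
    ∀ k : ℕ, 5 ≤ k → k ≤ n + 2 →
      Int.fract ((s n : ℝ) / (k ! : ℝ)) ≤ 1 / 2 + 13 / (24 * (k : ℝ)) := by
  intro k hk hkn
  obtain ⟨j, rfl⟩ : ∃ j, k = j + 2 := ⟨k - 2, by omega⟩
  rw [Int.fract_div_intCast_eq_div_intCast_mod, s_emod_factorial (by omega : j ≤ n)]
  have hbound : (2 * s j : ℝ) ≤ ((j + 2)! : ℝ) := by exact_mod_cast two_mul_s_le_factorial j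
  have hhalf : (s j : ℝ) / ((j + 2)! : ℝ) ≤ 1 / 2 := by
    rw [div_le_iff₀ (by positivity)]
    linarith
  have : (0 : ℝ) < 13 / (24 * ((j + 2 : ℕ) : ℝ)) := by positivity
  linarith

theorem stmt_13 (n : ℕ) (hn : 1 ≤ n) :
    ∀ k : ℕ, 5 ≤ k → k ≤ n + 2 →
      Int.fract ((s n : ℝ) / (k ! : ℝ)) ≤ 1 / 2 + 13 / (24 * (k : ℝ)) :=
  stmt_13_general n
end

section
/- Let 0 < θ < 2π, θ ≠ π, ξ > 0, f = (ξ, 0), and T x = f + cos(θ/2)·L_{θ/2}(x − f) on ℝ². Then T is invertible and M := T⁻¹ − Id is given by M x = tan(θ/2)·A(x − f), where A is the matrix with rows (0, 1) and (−1, 0); moreover M is monotone: ⟨Mx − My, x − y⟩ = 0 ≥ 0 for all x, y. -/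
open Real

/-!
Writing `φ = θ / 2`, `T` is the affine map `x ↦ f + P (x - f)` with `P = cos φ • L φ`. On
`0 < θ < 2π` the only zero of `cos φ` is at `θ = π`, so `P` is invertible with inverse
`(cos φ)⁻¹ • L (-φ)`, and `T⁻¹ - Id` is `x ↦ ((cos φ)⁻¹ • L (-φ) - 1) (x - f)`.
Entrywise this matrix is `tan φ • A`, and `⟪A v, v⟫ = 0` because `A` is skew-symmetric.
-/

open Matrix Function
open scoped RealInnerProductSpace

lemma cos_half_ne_zero {θ : ℝ} (h0 : 0 < θ) (h2π : θ < 2 * π) (hπ : θ ≠ π) :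
    cos (θ / 2) ≠ 0 := by
  intro h
  have : θ / 2 = π / 2 :=
    injOn_cos ⟨by positivity, by linarith⟩ ⟨by positivity, by linarith [pi_pos]⟩ (by simpa)
  exact hπ (by linarith)

lemma L_add (a b : ℝ) : L (a + b) = L a * L b := by
  ext i j
  fin_cases i <;> fin_cases j <;> simp [L, cos_add, sin_add] <;> ring

lemma L_zero : L 0 = 1 := by
  ext i j
  fin_cases i <;> fin_cases j <;> simp [L]

lemma inv_smul_L_neg_mul_smul_L (φ : ℝ) {c : ℝ} (hc : c ≠ 0) :
    (c⁻¹ • L (-φ)) * (c • L φ) = 1 := by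
  rw [smul_mul_smul_comm, inv_mul_cancel₀ hc, one_smul, ← L_add, neg_add_cancel, L_zero]

lemma smul_L_mul_inv_smul_L_neg (φ : ℝ) {c : ℝ} (hc : c ≠ 0) :
    (c • L φ) * (c⁻¹ • L (-φ)) = 1 := by
  rw [smul_mul_smul_comm, mul_inv_cancel₀ hc, one_smul, ← L_add, add_neg_cancel, L_zero]

lemma cos_inv_smul_L_neg_sub_one {φ : ℝ} (hc : cos φ ≠ 0) :
    (cos φ)⁻¹ • L (-φ) - 1 = tan φ • !![0, 1; -1, 0] := by
  ext i j
  fin_cases i <;> fin_cases j <;> simp [L, tan_eq_sin_div_cos] <;> field_simp <;> norm_num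

lemma transpose_skew_fin_two :
    (!![0, 1; -1, 0] : Matrix (Fin 2) (Fin 2) ℝ)ᵀ = -!![0, 1; -1, 0] := by
  ext i j
  fin_cases i <;> fin_cases j <;> simp

lemma mulVecE_eq_toEuclideanCLM (A : Matrix (Fin 2) (Fin 2) ℝ) (x : EuclideanSpace ℝ (Fin 2)) :
    mulVecE A x = toEuclideanCLM (𝕜 := ℝ) A x := rfl

section EuclideanCLM

variable {𝕜 n : Type*} [RCLike 𝕜] [Fintype n] [DecidableEq n]

lemma leftInverse_toEuclideanCLM {A B : Matrix n n 𝕜} (h : B * A = 1) :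
    LeftInverse (toEuclideanCLM (𝕜 := 𝕜) B) (toEuclideanCLM (𝕜 := 𝕜) A) := fun x => by
  rw [← mul_apply_eq_comp, ← map_mul, h, map_one, one_apply_eq_self]

lemma inner_toEuclideanCLM_self_of_transpose_eq_neg {A : Matrix n n ℝ} (hA : Aᵀ = -A)
    (v : EuclideanSpace ℝ n) : ⟪v, toEuclideanCLM (𝕜 := ℝ) A v⟫ = 0 := by
  rw [inner_toEuclideanCLM]
  have : v ⬝ᵥ A *ᵥ v = -(v ⬝ᵥ A *ᵥ v) := calc
    v ⬝ᵥ A *ᵥ v = (Aᵀ *ᵥ v) ⬝ᵥ v := by rw [mulVec_transpose, dotProduct_mulVec]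
    _ = -(v ⬝ᵥ A *ᵥ v) := by rw [hA, neg_mulVec, neg_dotProduct, dotProduct_comm]
  linarith

end EuclideanCLM

section ConjSub

variable {E : Type*} [AddCommGroup E] (f : E) {p q : E → E}

lemma leftInverse_conj_sub (h : LeftInverse q p) :
    LeftInverse (fun y => f + q (y - f)) (fun x => f + p (x - f)) := by
  intro x
  simp only [add_sub_cancel_left, h (x - f), add_sub_cancel]

lemma bijective_conj_sub (hl : LeftInverse q p) (hr : RightInverse q p) :
    Bijective (fun x => f + p (x - f)) :=
  ⟨(leftInverse_conj_sub f hl).injective, (leftInverse_conj_sub f hr).surjective⟩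

lemma invFun_conj_sub [Nonempty E] (hl : LeftInverse q p) (hr : RightInverse q p) :
    invFun (fun x => f + p (x - f)) = fun y => f + q (y - f) :=
  invFun_eq_of_injective_of_rightInverse (bijective_conj_sub f hl hr).1
    (leftInverse_conj_sub f hr)

end ConjSub

theorem stmt_19_general (θ : ℝ) (hθ : 0 < θ) (hθ' : θ < 2 * π) (hθπ : θ ≠ π)
    (f : EuclideanSpace ℝ (Fin 2))
    (T : EuclideanSpace ℝ (Fin 2) → EuclideanSpace ℝ (Fin 2))
    (hT : ∀ x, T x = f + Real.cos (θ / 2) • mulVecE (L (θ / 2)) (x - f))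
    (M : EuclideanSpace ℝ (Fin 2) → EuclideanSpace ℝ (Fin 2))
    (hM : ∀ x, M x = Function.invFun T x - x) :
    Function.Bijective T ∧
    (∀ x, M x = Real.tan (θ / 2) • mulVecE !![0, 1; -1, 0] (x - f)) ∧
    (∀ x y, (inner ℝ (M x - M y) (x - y) : ℝ) = 0) := by
  have hc := cos_half_ne_zero hθ hθ' hθπ
  set P := toEuclideanCLM (𝕜 := ℝ) (cos (θ / 2) • L (θ / 2))
  set Q := toEuclideanCLM (𝕜 := ℝ) ((cos (θ / 2))⁻¹ • L (-(θ / 2)))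
  have hQP : LeftInverse Q P := leftInverse_toEuclideanCLM (inv_smul_L_neg_mul_smul_L _ hc)
  have hPQ : RightInverse Q P := leftInverse_toEuclideanCLM (smul_L_mul_inv_smul_L_neg _ hc)
  have hTP : T = fun x => f + P (x - f) := funext fun x => by
    simp only [hT, mulVecE_eq_toEuclideanCLM, P, map_smul, _root_.smul_apply]
  have hMx : ∀ x, M x = tan (θ / 2) • mulVecE !![0, 1; -1, 0] (x - f) := fun x => calc
    M x = (Q - 1) (x - f) := by
      simp only [hM, hTP, invFun_conj_sub f hQP hPQ]
      rw [_root_.sub_apply, one_apply_eq_self, sub_sub_eq_add_sub, add_comm (Q _) f]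
    _ = _ := by
      rw [← map_one (toEuclideanCLM (n := Fin 2) (𝕜 := ℝ)), ← map_sub,
        cos_inv_smul_L_neg_sub_one hc, map_smul, _root_.smul_apply, mulVecE_eq_toEuclideanCLM]
  refine ⟨hTP ▸ bijective_conj_sub f hQP hPQ, hMx, fun x y => ?_⟩
  rw [hMx, hMx, ← smul_sub, mulVecE_eq_toEuclideanCLM, mulVecE_eq_toEuclideanCLM, ← map_sub,
    sub_sub_sub_cancel_right, real_inner_smul_left, real_inner_comm,
    inner_toEuclideanCLM_self_of_transpose_eq_neg transpose_skew_fin_two, mul_zero]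

theorem stmt_19 (θ ξ : ℝ) (hθ : 0 < θ) (hθ' : θ < 2 * π) (hθπ : θ ≠ π) (hξ : 0 < ξ)
    (f : EuclideanSpace ℝ (Fin 2)) (hf : f = toE ![ξ, 0])
    (T : EuclideanSpace ℝ (Fin 2) → EuclideanSpace ℝ (Fin 2))
    (hT : ∀ x, T x = f + Real.cos (θ / 2) • mulVecE (L (θ / 2)) (x - f))
    (M : EuclideanSpace ℝ (Fin 2) → EuclideanSpace ℝ (Fin 2))
    (hM : ∀ x, M x = Function.invFun T x - x) :
    Function.Bijective T ∧
    (∀ x, M x = Real.tan (θ / 2) • mulVecE !![0, 1; -1, 0] (x - f)) ∧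
    (∀ x y, (inner ℝ (M x - M y) (x - y) : ℝ) = 0) :=
  stmt_19_general θ hθ hθ' hθπ f T hT M hM
end
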